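/- arXiv:2101.09295 — 8 statements merged into one kernel-verified Lean document; each statement's English description precedes it below -/
import Mathlib

section
/- Suppose A, B, k_1, k_4 are positive reals with A^2 k_1 < B k_4. Then there exists K > 0 such that for every k_8 > max(2 k_1, K) there exists κ > 0 such that for every K_M1 ∈ (0, κ), the function f(y) = k_1(A−y)^2 + k_8(A−y)y − B k_4 y/(K_M1 + y) has exactly three zeros y_1 < y_2 < y_3 in the open interval (0, A), and moreover f'(y_1) < 0, f'(y_2) > 0 and f'(y_3) < 0; that is, the ODE y' = f(y) has three hyperbolic steady states in (0,A), of which two are asymptotically stable and the other unstable. -/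
/-!
Clearing the denominator, the zeros of `f` in `(0, A)` are zeros of the cubic
`P(y) = (K_M1 + y)(k₁(A - y)² + k₈(A - y)y) - B k₄ y` with leading coefficient `k₁ - k₈ < 0`.
For `k₈ A² > 4 B k₄` and small `K_M1`, `f` is positive at `0` and `A/2` and negative at some
small `b` and at `A`: once `K_M1 ≪ b`, the phosphatase term `B k₄ y / (K_M1 + y)` at `y = b` is
already close to its saturation value `B k₄ > A² k₁`. The intermediate value theorem gives three zeros, which
are then all zeros of `P`, so `P = (k₁ - k₈)(y - y₁)(y - y₂)(y - y₃)`. At a zero of `P` we have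
`f' = P' / (K_M1 + y)`, whose signs at `y₁ < y₂ < y₃` are `-, +, -`.
-/

open Set

theorem quadratic_coeffs_eq_zero_of_three_roots {a b c x₁ x₂ x₃ : ℝ} (h₁₂ : x₁ ≠ x₂)
    (h₁₃ : x₁ ≠ x₃) (h₂₃ : x₂ ≠ x₃) (h₁ : a * x₁ ^ 2 + b * x₁ + c = 0)
    (h₂ : a * x₂ ^ 2 + b * x₂ + c = 0) (h₃ : a * x₃ ^ 2 + b * x₃ + c = 0) :
    a = 0 ∧ b = 0 ∧ c = 0 := by
  have h₁₂' : a * (x₁ + x₂) + b = 0 :=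
    mul_left_cancel₀ (sub_ne_zero.2 h₁₂) (by linear_combination h₁ - h₂)
  have h₁₃' : a * (x₁ + x₃) + b = 0 :=
    mul_left_cancel₀ (sub_ne_zero.2 h₁₃) (by linear_combination h₁ - h₃)
  have ha : a = 0 := mul_left_cancel₀ (sub_ne_zero.2 h₂₃) (by linear_combination h₁₂' - h₁₃')
  have hb : b = 0 := by linear_combination h₁₂' - (x₁ + x₂) * ha
  exact ⟨ha, hb, by linear_combination h₁ - x₁ ^ 2 * ha - x₁ * hb⟩

theorem cubic_eq_mul_prod_of_three_roots {a b c d x₁ x₂ x₃ : ℝ} (h₁₂ : x₁ ≠ x₂)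
    (h₁₃ : x₁ ≠ x₃) (h₂₃ : x₂ ≠ x₃) (h₁ : a * x₁ ^ 3 + b * x₁ ^ 2 + c * x₁ + d = 0)
    (h₂ : a * x₂ ^ 3 + b * x₂ ^ 2 + c * x₂ + d = 0)
    (h₃ : a * x₃ ^ 3 + b * x₃ ^ 2 + c * x₃ + d = 0) (y : ℝ) :
    a * y ^ 3 + b * y ^ 2 + c * y + d = a * ((y - x₁) * (y - x₂) * (y - x₃)) := by
  obtain ⟨h₂', h₁', h₀'⟩ := quadratic_coeffs_eq_zero_of_three_roots
    (a := b + a * (x₁ + x₂ + x₃)) (b := c - a * (x₁ * x₂ + x₁ * x₃ + x₂ * x₃))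
    (c := d + a * (x₁ * x₂ * x₃)) h₁₂ h₁₃ h₂₃
    (by linear_combination h₁) (by linear_combination h₂) (by linear_combination h₃)
  linear_combination y ^ 2 * h₂' + y * h₁' + h₀'

theorem hasDerivAt_cubic_at_root (a x₁ x₂ x₃ : ℝ) :
    HasDerivAt (fun y => a * ((y - x₁) * (y - x₂) * (y - x₃))) (a * ((x₁ - x₂) * (x₁ - x₃))) x₁ :=
  (((((hasDerivAt_id x₁).sub_const x₁).mul ((hasDerivAt_id x₁).sub_const x₂)).mul
    ((hasDerivAt_id x₁).sub_const x₃)).const_mul a).congr_deriv (by simp)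

theorem HasDerivAt.div_of_eq_zero {p g : ℝ → ℝ} {p' g' x : ℝ} (hp : HasDerivAt p p' x)
    (hg : HasDerivAt g g' x) (hgx : g x ≠ 0) (hpx : p x = 0) :
    HasDerivAt (fun y => p y / g y) (p' / g x) x :=
  (hp.div hg hgx).congr_deriv (by rw [hpx, zero_mul, sub_zero, sq, mul_div_mul_right _ _ hgx])

theorem exists_three_zeros_of_sign_changes {f : ℝ → ℝ} {a b c d : ℝ} (hab : a ≤ b) (hbc : b ≤ c)
    (hcd : c ≤ d) (hf : ContinuousOn f (Icc a d)) (ha : 0 < f a) (hb : f b < 0) (hc : 0 < f c)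
    (hd : f d < 0) :
    ∃ x₁ ∈ Ioo a b, ∃ x₂ ∈ Ioo b c, ∃ x₃ ∈ Ioo c d, f x₁ = 0 ∧ f x₂ = 0 ∧ f x₃ = 0 := by
  obtain ⟨x₁, hx₁, h₁⟩ := intermediate_value_Ioo' hab
    (hf.mono (Icc_subset_Icc le_rfl (hbc.trans hcd))) ⟨hb, ha⟩
  obtain ⟨x₂, hx₂, h₂⟩ := intermediate_value_Ioo hbc
    (hf.mono (Icc_subset_Icc hab hcd)) ⟨hb, hc⟩
  obtain ⟨x₃, hx₃, h₃⟩ := intermediate_value_Ioo' hcd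
    (hf.mono (Icc_subset_Icc (hab.trans hbc) le_rfl)) ⟨hd, hc⟩
  exact ⟨x₁, hx₁, x₂, hx₂, x₃, hx₃, h₁, h₂, h₃⟩

namespace Doherty

-- `β` stands for `B k₄`, the only combination in which `B` and `k₄` enter the model.
variable (A β k1 k8 KM1 : ℝ)

noncomputable section

def rate (y : ℝ) : ℝ := k1 * (A - y) ^ 2 + k8 * (A - y) * y - β * y / (KM1 + y)

def numerator (y : ℝ) : ℝ := (KM1 + y) * (k1 * (A - y) ^ 2 + k8 * (A - y) * y) - β * y

end

theorem numerator_eq_cubic (y : ℝ) :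
    numerator A β k1 k8 KM1 y =
      (k1 - k8) * y ^ 3 + (k8 * A - 2 * k1 * A + KM1 * (k1 - k8)) * y ^ 2
      + (k1 * A ^ 2 + KM1 * A * (k8 - 2 * k1) - β) * y + KM1 * k1 * A ^ 2 := by
  unfold numerator
  ring

theorem rate_eq_numerator_div {y : ℝ} (hy : KM1 + y ≠ 0) :
    rate A β k1 k8 KM1 y = numerator A β k1 k8 KM1 y / (KM1 + y) := by
  unfold rate numerator
  field_simp

theorem rate_eq_zero_iff {y : ℝ} (hy : KM1 + y ≠ 0) :
    rate A β k1 k8 KM1 y = 0 ↔ numerator A β k1 k8 KM1 y = 0 := by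
  rw [rate_eq_numerator_div A β k1 k8 KM1 hy, div_eq_zero_iff, or_iff_left hy]

theorem numerator_eq_mul_prod {y₁ y₂ y₃ : ℝ} (h₁₂ : y₁ ≠ y₂) (h₁₃ : y₁ ≠ y₃) (h₂₃ : y₂ ≠ y₃)
    (h₁ : numerator A β k1 k8 KM1 y₁ = 0) (h₂ : numerator A β k1 k8 KM1 y₂ = 0)
    (h₃ : numerator A β k1 k8 KM1 y₃ = 0) :
    numerator A β k1 k8 KM1 = fun y => (k1 - k8) * ((y - y₁) * (y - y₂) * (y - y₃)) := by
  rw [numerator_eq_cubic] at h₁ h₂ h₃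
  funext y
  rw [numerator_eq_cubic]
  exact cubic_eq_mul_prod_of_three_roots h₁₂ h₁₃ h₂₃ h₁ h₂ h₃ y

theorem hasDerivAt_rate_of_numerator_eq {a x u v : ℝ}
    (hP : numerator A β k1 k8 KM1 = fun y => a * ((y - x) * (y - u) * (y - v)))
    (hx : KM1 + x ≠ 0) :
    HasDerivAt (rate A β k1 k8 KM1) (a * ((x - u) * (x - v)) / (KM1 + x)) x := by
  have hquot : HasDerivAt (fun y => numerator A β k1 k8 KM1 y / (KM1 + y))
      (a * ((x - u) * (x - v)) / (KM1 + x)) x := by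
    rw [hP]
    exact (hasDerivAt_cubic_at_root a x u v).div_of_eq_zero
      ((hasDerivAt_id x).const_add KM1) hx (by ring)
  refine hquot.congr_of_eventuallyEq ?_
  filter_upwards [(continuous_const.add continuous_id).continuousAt.eventually_ne hx] with y hy
  exact rate_eq_numerator_div A β k1 k8 KM1 hy

theorem continuousOn_rate : ContinuousOn (rate A β k1 k8 KM1) (Ioi (-KM1)) := by
  unfold rate
  refine ContinuousOn.sub (by fun_prop) (ContinuousOn.div (by fun_prop) (by fun_prop) ?_)
  intro y (hy : -KM1 < y)
  linarith

theorem rate_zero_pos (hA : 0 < A) (hk1 : 0 < k1) : 0 < rate A β k1 k8 KM1 0 := by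
  simp only [rate, sub_zero, mul_zero, zero_div]
  positivity

theorem rate_self_neg (hA : 0 < A) (hβ : 0 < β) (hKM1 : 0 ≤ KM1) : rate A β k1 k8 KM1 A < 0 := by
  have h : 0 < β * A / (KM1 + A) := by positivity
  simp only [rate, sub_self]
  linarith

theorem rate_half_pos (hA : 0 < A) (hk1 : 0 < k1) (hβ : 0 ≤ β) (hKM1 : 0 ≤ KM1)
    (hk8 : 4 * β ≤ k8 * A ^ 2) : 0 < rate A β k1 k8 KM1 (A / 2) := by
  have hsat : β * (A / 2) / (KM1 + A / 2) ≤ β := by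
    rw [div_le_iff₀ (by positivity)]
    nlinarith
  have hk1A : 0 < k1 * A ^ 2 := by positivity
  unfold rate
  nlinarith

theorem rate_le (hk1 : 0 ≤ k1) (hk8 : 0 ≤ k8) (hβ : 0 ≤ β) (hKM1 : 0 ≤ KM1) {y : ℝ} (hy : 0 < y)
    (hyA : y ≤ A) : rate A β k1 k8 KM1 y ≤ k1 * A ^ 2 + k8 * A * y - β + β * KM1 / y := by
  have hsq : k1 * (A - y) ^ 2 ≤ k1 * A ^ 2 :=
    mul_le_mul_of_nonneg_left (pow_le_pow_left₀ (sub_nonneg.2 hyA) (by linarith) 2) hk1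
  have hlin : k8 * (A - y) * y ≤ k8 * A * y := by nlinarith [mul_nonneg hk8 hy.le]
  have hsat : β * y / (KM1 + y) = β - β * KM1 / (KM1 + y) := by
    field_simp
    ring
  have hgap : β * KM1 / (KM1 + y) ≤ β * KM1 / y :=
    div_le_div_of_nonneg_left (mul_nonneg hβ hKM1) hy (by linarith)
  unfold rate
  linarith

theorem exists_forall_rate_neg (hA : 0 < A) (hk1 : 0 ≤ k1) (hk8 : 0 < k8) (hβ : A ^ 2 * k1 < β)
    (hk8A : β < k8 * A ^ 2) :
    ∃ b ∈ Ioo 0 (A / 2), ∃ κ > 0, ∀ K ∈ Ioo 0 κ, rate A β k1 k8 K b < 0 := by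
  set ε := (β - A ^ 2 * k1) / 2 with hε_def
  set b := ε / (k8 * A)
  have hε : 0 < ε := by linarith
  have hβ0 : 0 < β := by nlinarith
  have hb : 0 < b := by positivity
  have hk8b : k8 * A * b = ε := by simp only [b]; field_simp
  have hbA : b < A / 2 := by
    rw [div_lt_iff₀ (by positivity)]
    nlinarith [mul_nonneg (sq_nonneg A) hk1]
  refine ⟨b, ⟨hb, hbA⟩, ε * b / β, by positivity, fun K ⟨hK, hKκ⟩ => ?_⟩
  have hgap : β * K / b < ε := by
    rw [lt_div_iff₀ hβ0] at hKκ
    rw [div_lt_iff₀ hb]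
    linarith
  calc rate A β k1 k8 K b ≤ k1 * A ^ 2 + k8 * A * b - β + β * K / b :=
        rate_le A β k1 k8 K hk1 hk8.le hβ0.le hK.le hb (by linarith)
    _ < 0 := by linarith

theorem rate_zeros_and_deriv_signs (hk : k1 < k8) {y₁ y₂ y₃ : ℝ} (h₁₂ : y₁ < y₂) (h₂₃ : y₂ < y₃)
    (hy₁ : 0 < KM1 + y₁) (h₁ : rate A β k1 k8 KM1 y₁ = 0) (h₂ : rate A β k1 k8 KM1 y₂ = 0)
    (h₃ : rate A β k1 k8 KM1 y₃ = 0) :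
    (∀ y, KM1 + y ≠ 0 → (rate A β k1 k8 KM1 y = 0 ↔ y = y₁ ∨ y = y₂ ∨ y = y₃)) ∧
      deriv (rate A β k1 k8 KM1) y₁ < 0 ∧ deriv (rate A β k1 k8 KM1) y₂ > 0 ∧
      deriv (rate A β k1 k8 KM1) y₃ < 0 := by
  have hy₂ : 0 < KM1 + y₂ := by linarith
  have hy₃ : 0 < KM1 + y₃ := by linarith
  rw [rate_eq_zero_iff A β k1 k8 KM1 hy₁.ne'] at h₁
  rw [rate_eq_zero_iff A β k1 k8 KM1 hy₂.ne'] at h₂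
  rw [rate_eq_zero_iff A β k1 k8 KM1 hy₃.ne'] at h₃
  have hP := numerator_eq_mul_prod A β k1 k8 KM1 h₁₂.ne (h₁₂.trans h₂₃).ne h₂₃.ne h₁ h₂ h₃
  have ha : k1 - k8 < 0 := sub_neg.2 hk
  refine ⟨fun y hy => ?_, ?_, ?_, ?_⟩
  · rw [rate_eq_zero_iff A β k1 k8 KM1 hy, hP]
    simp [ha.ne, sub_eq_zero, or_assoc]
  · rw [(hasDerivAt_rate_of_numerator_eq A β k1 k8 KM1 hP hy₁.ne').deriv]
    exact div_neg_of_neg_of_pos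
      (mul_neg_of_neg_of_pos ha (mul_pos_of_neg_of_neg (by linarith) (by linarith))) hy₁
  · have hP₂ : numerator A β k1 k8 KM1 = fun y => (k1 - k8) * ((y - y₂) * (y - y₁) * (y - y₃)) := by
      rw [hP]; funext y; ring
    rw [(hasDerivAt_rate_of_numerator_eq A β k1 k8 KM1 hP₂ hy₂.ne').deriv]
    exact div_pos
      (mul_pos_of_neg_of_neg ha (mul_neg_of_pos_of_neg (by linarith) (by linarith))) hy₂
  · have hP₃ : numerator A β k1 k8 KM1 = fun y => (k1 - k8) * ((y - y₃) * (y - y₁) * (y - y₂)) := by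
      rw [hP]; funext y; ring
    rw [(hasDerivAt_rate_of_numerator_eq A β k1 k8 KM1 hP₃ hy₃.ne').deriv]
    exact div_neg_of_neg_of_pos
      (mul_neg_of_neg_of_pos ha (mul_pos (by linarith) (by linarith))) hy₃

end Doherty

theorem doherty_bistability_general
    (A B k1 k4 : ℝ) (hA : 0 < A) (hk1 : 0 < k1)
    (hlt : A ^ 2 * k1 < B * k4) :
    ∃ K > (0 : ℝ), ∀ k8 : ℝ, k8 > max (2 * k1) K →
      ∃ κ > (0 : ℝ), ∀ KM1 : ℝ, KM1 ∈ Set.Ioo (0 : ℝ) κ →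
        ∃ y1 y2 y3 : ℝ,
          (fun f : ℝ → ℝ =>
            0 < y1 ∧ y1 < y2 ∧ y2 < y3 ∧ y3 < A ∧
            (∀ y ∈ Set.Ioo (0 : ℝ) A, (f y = 0 ↔ (y = y1 ∨ y = y2 ∨ y = y3))) ∧
            deriv f y1 < 0 ∧ deriv f y2 > 0 ∧ deriv f y3 < 0)
          (fun y => k1 * (A - y) ^ 2 + k8 * (A - y) * y - B * k4 * y / (KM1 + y)) := by
  have hβ : 0 < B * k4 := (by positivity : 0 < A ^ 2 * k1).trans hlt
  refine ⟨4 * (B * k4) / A ^ 2, by positivity, fun k8 hk8 => ?_⟩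
  rw [gt_iff_lt, max_lt_iff, div_lt_iff₀ (by positivity)] at hk8
  obtain ⟨hk1k8, hk8A⟩ := hk8
  obtain ⟨b, ⟨hb, hbA⟩, κ, hκ, hrate_b⟩ :=
    Doherty.exists_forall_rate_neg A (B * k4) k1 k8 hA hk1.le (by linarith) hlt (by linarith)
  refine ⟨κ, hκ, fun KM1 hKM1 => ?_⟩
  obtain ⟨y₁, ⟨hy₁, hy₁b⟩, y₂, ⟨hby₂, hy₂A⟩, y₃, ⟨hAy₃, hy₃⟩, h₁, h₂, h₃⟩ :=
    exists_three_zeros_of_sign_changes hb.le hbA.le (by linarith)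
      ((Doherty.continuousOn_rate A (B * k4) k1 k8 KM1).mono fun y hy =>
        show -KM1 < y by linarith [hKM1.1, hy.1])
      (Doherty.rate_zero_pos A (B * k4) k1 k8 KM1 hA hk1) (hrate_b KM1 hKM1)
      (Doherty.rate_half_pos A (B * k4) k1 k8 KM1 hA hk1 hβ.le hKM1.1.le hk8A.le)
      (Doherty.rate_self_neg A (B * k4) k1 k8 KM1 hA hβ hKM1.1.le)
  obtain ⟨hzeros, hd₁, hd₂, hd₃⟩ := Doherty.rate_zeros_and_deriv_signs A (B * k4) k1 k8 KM1
    (by linarith) (hy₁b.trans hby₂) (hy₂A.trans hAy₃) (by linarith [hKM1.1]) h₁ h₂ h₃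
  exact ⟨y₁, y₂, y₃, hy₁, hy₁b.trans hby₂, hy₂A.trans hAy₃, hy₃,
    fun y hy => hzeros y (by linarith [hKM1.1, hy.1] : 0 < KM1 + y).ne', hd₁, hd₂, hd₃⟩

/-- **Theorem 1 (Kreusser–Rendall).** If `A² k₁ < B k₄`, then for every sufficiently large
`k₈` (in particular `k₈ > 2 k₁`, i.e. `α > 2`) and every sufficiently small `K_M1 > 0`,
the Doherty model `y' = f(y)` with
`f(y) = k₁ (A−y)² + k₈ (A−y) y − B k₄ y / (K_M1 + y)`
has exactly three steady states in `(0, A)`, all hyperbolic; the outer two are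
asymptotically stable (`f' < 0`) and the middle one is unstable (`f' > 0`). -/
theorem doherty_bistability
    (A B k1 k4 : ℝ) (hA : 0 < A) (hB : 0 < B) (hk1 : 0 < k1) (hk4 : 0 < k4)
    (hlt : A ^ 2 * k1 < B * k4) :
    ∃ K > (0 : ℝ), ∀ k8 : ℝ, k8 > max (2 * k1) K →
      ∃ κ > (0 : ℝ), ∀ KM1 : ℝ, KM1 ∈ Set.Ioo (0 : ℝ) κ →
        ∃ y1 y2 y3 : ℝ,
          (fun f : ℝ → ℝ =>
            0 < y1 ∧ y1 < y2 ∧ y2 < y3 ∧ y3 < A ∧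
            (∀ y ∈ Set.Ioo (0 : ℝ) A, (f y = 0 ↔ (y = y1 ∨ y = y2 ∨ y = y3))) ∧
            deriv f y1 < 0 ∧ deriv f y2 > 0 ∧ deriv f y3 < 0)
          (fun y => k1 * (A - y) ^ 2 + k8 * (A - y) * y - B * k4 * y / (KM1 + y)) :=
  doherty_bistability_general A B k1 k4 hA hk1 hlt
end

section
/- If the parameters A, B, K_M1, k_1, k_4, k_8 are positive and k_8 < k_1, then the cubic polynomial p_3(y) = ((k_1−k_8)y^2 + (k_8−2k_1)A y + k_1 A^2)(K_M1 + y) − B k_4 y has exactly one root in the open interval (0, A); moreover it has exactly one root in (−∞, 0) and exactly one root in (A, ∞). -/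
open Polynomial

lemma cubic_pos_large (a b c e y : ℝ) (ha : 0 < a) (hy1 : 1 ≤ y)
    (hy2 : (|b| + |c| + |e|) / a < y) : 0 < a * y ^ 3 + b * y ^ 2 + c * y + e := by
  rw [div_lt_iff₀ ha] at hy2
  have hy0 : (0:ℝ) < y := lt_of_lt_of_le one_pos hy1
  have hys : (0:ℝ) < y ^ 2 := by positivity
  have hy21 : (1:ℝ) ≤ y ^ 2 := by nlinarith
  have key : (|b| + |c| + |e|) * y ^ 2 < a * y ^ 3 := by nlinarith
  have hb : -(|b| * y ^ 2) ≤ b * y ^ 2 := by nlinarith [neg_abs_le b]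
  have hc : -(|c| * y ^ 2) ≤ c * y := by
    nlinarith [neg_abs_le c, mul_nonneg (mul_nonneg (abs_nonneg c) hy0.le) (by linarith : (0:ℝ) ≤ y - 1)]
  have he : -(|e| * y ^ 2) ≤ e := by
    nlinarith [neg_abs_le e, mul_nonneg (abs_nonneg e) (by linarith : (0:ℝ) ≤ y ^ 2 - 1)]
  nlinarith [key, hb, hc, he]

lemma cubic_four_roots (a b c e x1 x2 x3 x4 : ℝ) (ha : a ≠ 0)
    (h12 : x1 ≠ x2) (h13 : x1 ≠ x3) (h14 : x1 ≠ x4)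
    (h23 : x2 ≠ x3) (h24 : x2 ≠ x4) (h34 : x3 ≠ x4)
    (hr1 : a * x1 ^ 3 + b * x1 ^ 2 + c * x1 + e = 0)
    (hr2 : a * x2 ^ 3 + b * x2 ^ 2 + c * x2 + e = 0)
    (hr3 : a * x3 ^ 3 + b * x3 ^ 2 + c * x3 + e = 0)
    (hr4 : a * x4 ^ 3 + b * x4 ^ 2 + c * x4 + e = 0) : False := by
  set P : ℝ[X] := C a * X ^ 3 + C b * X ^ 2 + C c * X + C e with hP
  have hdeg : P.natDegree = 3 := by rw [hP]; compute_degree!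
  have hP0 : P ≠ 0 := by
    intro h0
    rw [h0] at hdeg
    simp at hdeg
  have heval : ∀ x : ℝ, P.eval x = a * x ^ 3 + b * x ^ 2 + c * x + e := by
    intro x; simp [hP]
  have hmem : ∀ x : ℝ, a * x ^ 3 + b * x ^ 2 + c * x + e = 0 → x ∈ P.roots.toFinset := by
    intro x hx
    rw [Multiset.mem_toFinset, mem_roots hP0]
    show P.eval x = 0
    rw [heval]; exact hx
  have hsub : ({x1, x2, x3, x4} : Finset ℝ) ⊆ P.roots.toFinset := by
    intro x hx
    simp only [Finset.mem_insert, Finset.mem_singleton] at hx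
    rcases hx with rfl | rfl | rfl | rfl
    exacts [hmem _ hr1, hmem _ hr2, hmem _ hr3, hmem _ hr4]
  have hcard : ({x1, x2, x3, x4} : Finset ℝ).card = 4 := by
    rw [Finset.card_insert_of_notMem (by simp [h12, h13, h14]),
      Finset.card_insert_of_notMem (by simp [h23, h24]),
      Finset.card_insert_of_notMem (by simp [h34]), Finset.card_singleton]
  have h1 : 4 ≤ P.roots.toFinset.card := hcard ▸ Finset.card_le_card hsub
  have h2 : P.roots.toFinset.card ≤ 3 := by
    calc P.roots.toFinset.card ≤ Multiset.card P.roots := P.roots.toFinset_card_le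
      _ ≤ P.natDegree := P.card_roots'
      _ = 3 := hdeg
  omega

/-- If `k₈ < k₁` (phosphorylation inhibits the enzyme), the steady-state cubic
`p₃(y) = ((k₁−k₈) y² + (k₈−2k₁) A y + k₁ A²)(K_M1 + y) − B k₄ y`
has exactly one root in `(0, A)`, exactly one root in `(−∞, 0)` and exactly one
root in `(A, ∞)`. -/
theorem p3_unique_root_of_inhibitory
    (A B KM1 k1 k4 k8 : ℝ)
    (hA : 0 < A) (hB : 0 < B) (hKM1 : 0 < KM1)
    (hk1 : 0 < k1) (hk4 : 0 < k4) (hk8 : 0 < k8)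
    (h : k8 < k1) :
    (∃! y : ℝ, y ∈ Set.Ioo (0 : ℝ) A ∧
      ((k1 - k8) * y ^ 2 + (k8 - 2 * k1) * A * y + k1 * A ^ 2) * (KM1 + y) - B * k4 * y = 0) ∧
    (∃! y : ℝ, y ∈ Set.Iio (0 : ℝ) ∧
      ((k1 - k8) * y ^ 2 + (k8 - 2 * k1) * A * y + k1 * A ^ 2) * (KM1 + y) - B * k4 * y = 0) ∧
    (∃! y : ℝ, y ∈ Set.Ioi A ∧
      ((k1 - k8) * y ^ 2 + (k8 - 2 * k1) * A * y + k1 * A ^ 2) * (KM1 + y) - B * k4 * y = 0) := by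
  set a := k1 - k8 with ha_def
  set b := (k8 - 2 * k1) * A + (k1 - k8) * KM1 with hb_def
  set c := k1 * A ^ 2 + (k8 - 2 * k1) * A * KM1 - B * k4 with hc_def
  set e := k1 * A ^ 2 * KM1 with he_def
  have ha : 0 < a := by rw [ha_def]; linarith
  have heq : ∀ y : ℝ,
      ((k1 - k8) * y ^ 2 + (k8 - 2 * k1) * A * y + k1 * A ^ 2) * (KM1 + y) - B * k4 * y
        = a * y ^ 3 + b * y ^ 2 + c * y + e := by
    intro y
    rw [ha_def, hb_def, hc_def, he_def]; ring
  set f : ℝ → ℝ := fun y => a * y ^ 3 + b * y ^ 2 + c * y + e with hf_def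
  have hcont : Continuous f := by rw [hf_def]; continuity
  have hf0 : 0 < f 0 := by
    have : f 0 = e := by rw [hf_def]; ring
    rw [this, he_def]; positivity
  have hfA : f A < 0 := by
    have : f A = -(B * k4 * A) := by
      rw [hf_def]; simp only; rw [ha_def, hb_def, hc_def, he_def]; ring
    rw [this]
    have := mul_pos (mul_pos hB hk4) hA
    linarith
  -- large points
  set R : ℝ := max (A + 1) ((|b| + |c| + |e|) / a + 1) with hR_def
  have hRA : A < R := lt_of_lt_of_le (by linarith) (le_max_left _ _)
  have hR1 : (1 : ℝ) ≤ R := le_trans (by linarith) (le_max_left _ _)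
  have hR2 : (|b| + |c| + |e|) / a < R := lt_of_lt_of_le (by linarith) (le_max_right _ _)
  have hfR : 0 < f R := cubic_pos_large a b c e R ha hR1 hR2
  set L : ℝ := -(max 1 ((|b| + |c| + |e|) / a + 1)) with hL_def
  have hL1 : (1 : ℝ) ≤ -L := by rw [hL_def, neg_neg]; exact le_max_left _ _
  have hL2 : (|b| + |c| + |e|) / a < -L := by
    rw [hL_def, neg_neg]; exact lt_of_lt_of_le (by linarith) (le_max_right _ _)
  have hL0 : L < 0 := by linarith
  have hfL : f L < 0 := by
    have hpos : 0 < a * (-L) ^ 3 + (-b) * (-L) ^ 2 + c * (-L) + (-e) := by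
      apply cubic_pos_large a (-b) c (-e) (-L) ha hL1
      rwa [abs_neg, abs_neg]
    have : a * (-L) ^ 3 + (-b) * (-L) ^ 2 + c * (-L) + (-e) = -(f L) := by
      rw [hf_def]; ring
    rw [this] at hpos; linarith
  -- roots via IVT
  obtain ⟨r1, hr1m, hr1⟩ : ∃ r ∈ Set.Ioo L 0, f r = 0 := by
    have := intermediate_value_Ioo hL0.le hcont.continuousOn
      (Set.mem_Ioo.mpr ⟨hfL, hf0⟩)
    obtain ⟨r, hr, hre⟩ := this
    exact ⟨r, hr, hre⟩
  obtain ⟨r2, hr2m, hr2⟩ : ∃ r ∈ Set.Ioo (0 : ℝ) A, f r = 0 := by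
    have := intermediate_value_Ioo' hA.le hcont.continuousOn
      (Set.mem_Ioo.mpr ⟨hfA, hf0⟩)
    obtain ⟨r, hr, hre⟩ := this
    exact ⟨r, hr, hre⟩
  obtain ⟨r3, hr3m, hr3⟩ : ∃ r ∈ Set.Ioo A R, f r = 0 := by
    have := intermediate_value_Ioo hRA.le hcont.continuousOn
      (Set.mem_Ioo.mpr ⟨hfA, hfR⟩)
    obtain ⟨r, hr, hre⟩ := this
    exact ⟨r, hr, hre⟩
  have hfe : ∀ y : ℝ, f y = a * y ^ 3 + b * y ^ 2 + c * y + e := fun y => rfl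
  have four : ∀ x1 x2 x3 x4 : ℝ, x1 ≠ x2 → x1 ≠ x3 → x1 ≠ x4 → x2 ≠ x3 → x2 ≠ x4 →
      x3 ≠ x4 → f x1 = 0 → f x2 = 0 → f x3 = 0 → f x4 = 0 → False := by
    intro x1 x2 x3 x4 h12 h13 h14 h23 h24 h34 g1 g2 g3 g4
    exact cubic_four_roots a b c e x1 x2 x3 x4 ha.ne' h12 h13 h14 h23 h24 h34
      ((hfe x1) ▸ g1) ((hfe x2) ▸ g2) ((hfe x3) ▸ g3) ((hfe x4) ▸ g4)
  have e1 : r1 < 0 := hr1m.2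
  have e2a : 0 < r2 := hr2m.1
  have e2b : r2 < A := hr2m.2
  have e3 : A < r3 := hr3m.1
  refine ⟨⟨r2, ⟨hr2m, by rw [heq]; exact hr2⟩, ?_⟩,
          ⟨r1, ⟨e1, by rw [heq]; exact hr1⟩, ?_⟩,
          ⟨r3, ⟨e3, by rw [heq]; exact hr3⟩, ?_⟩⟩
  · rintro y ⟨hy, hroot⟩
    obtain ⟨hy1, hy2⟩ := hy
    rw [heq] at hroot
    by_contra hne
    exact four r1 y r2 r3 (by rintro rfl; linarith) (by rintro rfl; linarith)
      (by rintro rfl; linarith) hne (by rintro rfl; linarith)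
      (by rintro rfl; linarith) hr1 hroot hr2 hr3
  · rintro y ⟨hy, hroot⟩
    rw [Set.mem_Iio] at hy
    rw [heq] at hroot
    by_contra hne
    exact four y r1 r2 r3 hne (by rintro rfl; linarith) (by rintro rfl; linarith)
      (by rintro rfl; linarith) (by rintro rfl; linarith)
      (by rintro rfl; linarith) hroot hr1 hr2 hr3
  · rintro y ⟨hy, hroot⟩
    rw [Set.mem_Ioi] at hy
    rw [heq] at hroot
    by_contra hne
    exact four r1 r2 y r3 (by rintro rfl; linarith) (by rintro rfl; linarith)
      (by rintro rfl; linarith) (by rintro rfl; linarith)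
      (by rintro rfl; linarith) hne hr1 hr2 hroot hr3
end

section
/- Fix positive reals B and k_1, and define Φ : ℝ^4 → ℝ^4 by Φ(α, K_M1, A, k_4) = (a, b, c, d) with a = −(α−1), b = −K_M1(α−1) + A(α−2), c = K_M1 A (α−2) + A^2 − B k_1^{-1} k_4, d = K_M1 A^2. Then at every point (α, K_M1, A, k_4) with α > 2, K_M1 > 0 and A > 0, the (Fréchet) derivative of Φ is an invertible linear map; in particular the Jacobian determinant of Φ is nonzero there. -/
/-! The Jacobian of the coefficient map is, up to the order of its rows and columns, block
triangular: `a` depends on `α` alone, `k₄` enters only `c` (with coefficient `-B k₁⁻¹`), and what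
remains is the `2 × 2` block of `(b, d)` in `(K_M1, A)`, with determinant
`-(2 K_M1 A (α - 1) + A² (α - 2))`. For `α > 2`, `K_M1 > 0`, `A > 0` every factor is nonzero. -/

section

variable {𝕜 E : Type*} [NontriviallyNormedField 𝕜] [CompleteSpace 𝕜] [NormedAddCommGroup E]
  [NormedSpace 𝕜 E] [FiniteDimensional 𝕜 E]

theorem HasFDerivAt.exists_continuousLinearEquiv_of_injective {f : E → E} {f' : E →L[𝕜] E}
    {x : E} (hf : HasFDerivAt f f' x) (hinj : Function.Injective f') :
    ∃ L : E ≃L[𝕜] E, HasFDerivAt f (L : E →L[𝕜] E) x :=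
  ⟨(LinearEquiv.ofInjectiveEndo (f' : E →ₗ[𝕜] E) hinj).toContinuousLinearEquiv, hf⟩

end

namespace Doherty

def coeffMap (β : ℝ) (p : ℝ × ℝ × ℝ × ℝ) : ℝ × ℝ × ℝ × ℝ :=
  (-(p.1 - 1),
   -(p.2.1 * (p.1 - 1)) + p.2.2.1 * (p.1 - 2),
   p.2.1 * p.2.2.1 * (p.1 - 2) + p.2.2.1 ^ 2 - β * p.2.2.2,
   p.2.1 * p.2.2.1 ^ 2)

def coeffJacobian (β α K A : ℝ) : (ℝ × ℝ × ℝ × ℝ) →ₗ[ℝ] ℝ × ℝ × ℝ × ℝ where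
  toFun v :=
    (-v.1,
     (A - K) * v.1 - (α - 1) * v.2.1 + (α - 2) * v.2.2.1,
     K * A * v.1 + A * (α - 2) * v.2.1 + (K * (α - 2) + 2 * A) * v.2.2.1 - β * v.2.2.2,
     A ^ 2 * v.2.1 + 2 * K * A * v.2.2.1)
  map_add' x y := by
    simp only [Prod.fst_add, Prod.snd_add, Prod.mk_add_mk]
    ring_nf
  map_smul' c x := by
    simp only [Prod.smul_fst, Prod.smul_snd, Prod.smul_mk, smul_eq_mul, RingHom.id_apply]
    ring_nf

theorem hasFDerivAt_coeffMap (β α K A k : ℝ) :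
    HasFDerivAt (coeffMap β) (LinearMap.toContinuousLinearMap (coeffJacobian β α K A))
      (α, K, A, k) := by
  set p : ℝ × ℝ × ℝ × ℝ := (α, K, A, k)
  have hα : HasFDerivAt (fun q : ℝ × ℝ × ℝ × ℝ => q.1) _ p := hasFDerivAt_fst (𝕜 := ℝ)
  have hK : HasFDerivAt (fun q : ℝ × ℝ × ℝ × ℝ => q.2.1) _ p := (hasFDerivAt_snd (𝕜 := ℝ)).fst
  have hA : HasFDerivAt (fun q : ℝ × ℝ × ℝ × ℝ => q.2.2.1) _ p :=
    hasFDerivAt_fst.comp p (hasFDerivAt_snd.comp p (hasFDerivAt_snd (𝕜 := ℝ)))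
  have hk : HasFDerivAt (fun q : ℝ × ℝ × ℝ × ℝ => q.2.2.2) _ p :=
    hasFDerivAt_snd.comp p (hasFDerivAt_snd.comp p (hasFDerivAt_snd (𝕜 := ℝ)))
  have h := (hα.sub_const 1).neg.prodMk
    (((hK.mul (hα.sub_const 1)).neg.add (hA.mul (hα.sub_const 2))).prodMk
    ((((hK.mul hA).mul (hα.sub_const 2)).add (hA.pow 2)).sub (hk.const_mul β) |>.prodMk
    (hK.mul (hA.pow 2))))
  refine h.congr_fderiv (ContinuousLinearMap.ext fun v => ?_)
  ext <;> simp [coeffJacobian, p] <;> ring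

theorem coeffJacobian_injective {β α K A : ℝ} (hβ : β ≠ 0)
    (hdet : 2 * K * A * (α - 1) + A ^ 2 * (α - 2) ≠ 0) :
    Function.Injective (coeffJacobian β α K A) := by
  rw [← LinearMap.ker_eq_bot, LinearMap.ker_eq_bot']
  rintro ⟨v₁, v₂, v₃, v₄⟩ hv
  simp only [coeffJacobian, LinearMap.coe_mk, AddHom.coe_mk, Prod.mk_eq_zero] at hv ⊢
  obtain ⟨h₁, h₂, h₃, h₄⟩ := hv
  obtain rfl : v₁ = 0 := neg_eq_zero.mp h₁
  have hv₂ : (2 * K * A * (α - 1) + A ^ 2 * (α - 2)) * v₂ = 0 := by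
    linear_combination (α - 2) * h₄ - 2 * K * A * h₂
  have hv₃ : (2 * K * A * (α - 1) + A ^ 2 * (α - 2)) * v₃ = 0 := by
    linear_combination (α - 1) * h₄ + A ^ 2 * h₂
  obtain rfl := (mul_eq_zero.mp hv₂).resolve_left hdet
  obtain rfl := (mul_eq_zero.mp hv₃).resolve_left hdet
  have hv₄ : β * v₄ = 0 := by linear_combination -h₃
  exact ⟨rfl, rfl, rfl, (mul_eq_zero.mp hv₄).resolve_left hβ⟩

end Doherty

open Doherty in
/-- The map from the parameters `(α, K_M1, A, k₄)` to the coefficients `(a, b, c, d)` of the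
steady-state cubic, namely
`a = −(α−1)`, `b = −K_M1(α−1) + A(α−2)`, `c = K_M1 A(α−2) + A² − B k₁⁻¹ k₄`, `d = K_M1 A²`,
has invertible derivative at every point with `α > 2`, `K_M1 > 0`, `A > 0`. -/
theorem coefficient_map_derivative_invertible
    (B k1 : ℝ) (hB : 0 < B) (hk1 : 0 < k1) :
    ∀ α KM1 A k4 : ℝ, 2 < α → 0 < KM1 → 0 < A →
      ∃ L : (ℝ × ℝ × ℝ × ℝ) ≃L[ℝ] (ℝ × ℝ × ℝ × ℝ),
        HasFDerivAt
          (fun p : ℝ × ℝ × ℝ × ℝ =>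
            ((-(p.1 - 1) : ℝ),
             (-(p.2.1 * (p.1 - 1)) + p.2.2.1 * (p.1 - 2) : ℝ),
             (p.2.1 * p.2.2.1 * (p.1 - 2) + p.2.2.1 ^ 2 - B * k1⁻¹ * p.2.2.2 : ℝ),
             (p.2.1 * p.2.2.1 ^ 2 : ℝ)))
          (L : (ℝ × ℝ × ℝ × ℝ) →L[ℝ] (ℝ × ℝ × ℝ × ℝ)) (α, KM1, A, k4) := by
  intro α KM1 A k4 hα hK hA
  have hdet : 0 < 2 * KM1 * A * (α - 1) + A ^ 2 * (α - 2) := by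
    have := mul_pos (mul_pos hK hA) (by linarith : (0 : ℝ) < α - 1)
    have := mul_pos (pow_pos hA 2) (sub_pos.mpr hα)
    linarith
  exact (hasFDerivAt_coeffMap (B * k1⁻¹) α KM1 A k4).exists_continuousLinearEquiv_of_injective
    (coeffJacobian_injective (by positivity) hdet.ne')
end

section
/- There exist positive real parameters k_1, k_2, k_3, k_4, k_8, A, B and ε_0 > 0 such that for every ε ∈ (0, ε_0), the planar system y' = k_1(A−B+f−y)^2 − k_2 f y + k_3(B−f) + k_8(A−B+f−y)y, f' = ε^{-1}(−k_2 f y + (k_3+k_4)(B−f)) has three distinct steady states in the region Ω = {(y,f) : y > 0, 0 < f < B, A − B + f − y > 0}; at two of these the Jacobian matrix of the right-hand side has negative trace and positive determinant (so they are hyperbolic and asymptotically stable), and at the third the Jacobian has negative determinant (so it is a hyperbolic saddle). -/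
/-!
Take `k₁ = 35, k₂ = 3000, k₃ = 3, k₄ = 297, k₈ = 285, A = 6, B = 3`. The `f`-nullcline is then
`f = 3 / (10 y + 1)`, and `k₁, k₈` were solved for so that the `y`-equation vanishes at three
rational points on it: `(1/2, 1/2)`, `(3/5, 3/7)` and `(7/5, 1/5)`. Multiplying the second
equation by `ε⁻¹ > 0` multiplies the Jacobian determinant by `ε⁻¹` and leaves the trace negative
as long as both diagonal entries are, so every sign is that of the system with `ε = 1`, where it
is a rational computation.
-/

namespace Autophosphorylation

section Jacobian

variable (V1 V2 : ℝ → ℝ → ℝ) (y f : ℝ)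

noncomputable def jacTrace : ℝ := deriv (fun s => V1 s f) y + deriv (fun s => V2 y s) f

noncomputable def jacDet : ℝ :=
  deriv (fun s => V1 s f) y * deriv (fun s => V2 y s) f
    - deriv (fun s => V1 y s) f * deriv (fun s => V2 s f) y

lemma jacTrace_const_mul_snd (c : ℝ) :
    jacTrace V1 (fun y f => c * V2 y f) y f
      = deriv (fun s => V1 s f) y + c * deriv (fun s => V2 y s) f := by
  simp only [jacTrace, deriv_const_mul_field']

lemma jacDet_const_mul_snd (c : ℝ) :
    jacDet V1 (fun y f => c * V2 y f) y f = c * jacDet V1 V2 y f := by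
  simp only [jacDet, deriv_const_mul_field']
  ring

end Jacobian

def IsSteadyState (V1 V2 : ℝ → ℝ → ℝ) (p : ℝ × ℝ) : Prop :=
  V1 p.1 p.2 = 0 ∧ V2 p.1 p.2 = 0

def IsStableSteadyState (V1 V2 : ℝ → ℝ → ℝ) (p : ℝ × ℝ) : Prop :=
  IsSteadyState V1 V2 p ∧ jacTrace V1 V2 p.1 p.2 < 0 ∧ 0 < jacDet V1 V2 p.1 p.2

def IsSaddleSteadyState (V1 V2 : ℝ → ℝ → ℝ) (p : ℝ × ℝ) : Prop :=
  IsSteadyState V1 V2 p ∧ jacDet V1 V2 p.1 p.2 < 0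

section ConstMulSnd

variable {V1 V2 : ℝ → ℝ → ℝ} {p : ℝ × ℝ} {c : ℝ}

lemma IsSteadyState.const_mul_snd (hp : IsSteadyState V1 V2 p) :
    IsSteadyState V1 (fun y f => c * V2 y f) p :=
  ⟨hp.1, by simp [hp.2]⟩

lemma IsSteadyState.isStableSteadyState_const_mul_snd (hp : IsSteadyState V1 V2 p) (hc : 0 < c)
    (hV1 : deriv (fun s => V1 s p.2) p.1 < 0) (hV2 : deriv (fun s => V2 p.1 s) p.2 < 0)
    (hdet : 0 < jacDet V1 V2 p.1 p.2) :
    IsStableSteadyState V1 (fun y f => c * V2 y f) p := by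
  refine ⟨hp.const_mul_snd, ?_, ?_⟩
  · rw [jacTrace_const_mul_snd]
    exact add_neg hV1 (mul_neg_of_pos_of_neg hc hV2)
  · rw [jacDet_const_mul_snd]
    exact mul_pos hc hdet

lemma IsSaddleSteadyState.const_mul_snd (hp : IsSaddleSteadyState V1 V2 p) (hc : 0 < c) :
    IsSaddleSteadyState V1 (fun y f => c * V2 y f) p := by
  refine ⟨hp.1.const_mul_snd, ?_⟩
  rw [jacDet_const_mul_snd]
  exact mul_neg_of_pos_of_neg hc hp.2

end ConstMulSnd

def rateY (k1 k2 k3 k8 A B : ℝ) (y f : ℝ) : ℝ :=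
  k1 * (A - B + f - y) ^ 2 - k2 * f * y + k3 * (B - f) + k8 * (A - B + f - y) * y

def rateF (k2 k3 k4 B : ℝ) (y f : ℝ) : ℝ :=
  -(k2 * f * y) + (k3 + k4) * (B - f)

section Derivatives

variable (k1 k2 k3 k4 k8 A B y f : ℝ)

lemma hasDerivAt_rateY_fst :
    HasDerivAt (fun s => rateY k1 k2 k3 k8 A B s f)
      (-2 * k1 * (A - B + f - y) - k2 * f + k8 * (A - B + f - 2 * y)) y := by
  have hu : HasDerivAt (fun s => A - B + f - s) (-1) y := by
    simpa using (hasDerivAt_id y).const_sub (A - B + f)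
  exact ((((hu.pow 2).const_mul k1).sub ((hasDerivAt_id y).const_mul (k2 * f))).add_const
    (k3 * (B - f)) |>.add ((hu.const_mul k8).mul (hasDerivAt_id y))).congr_deriv
    (by simp only [id]; push_cast; ring)

lemma hasDerivAt_rateY_snd :
    HasDerivAt (fun s => rateY k1 k2 k3 k8 A B y s)
      (2 * k1 * (A - B + f - y) - k2 * y - k3 + k8 * y) f := by
  have hu : HasDerivAt (fun s => A - B + s - y) 1 f := by
    simpa using ((hasDerivAt_id f).const_add (A - B)).sub_const y
  exact ((((hu.pow 2).const_mul k1).sub (((hasDerivAt_id f).const_mul k2).mul_const y)).add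
    ((hasDerivAt_id f).const_sub B |>.const_mul k3)).add ((hu.const_mul k8).mul_const y)
    |>.congr_deriv (by push_cast; ring)

lemma hasDerivAt_rateF_fst :
    HasDerivAt (fun s => rateF k2 k3 k4 B s f) (-(k2 * f)) y :=
  (((hasDerivAt_id y).const_mul (k2 * f)).neg.add_const ((k3 + k4) * (B - f))).congr_deriv
    (by ring)

lemma hasDerivAt_rateF_snd :
    HasDerivAt (fun s => rateF k2 k3 k4 B y s) (-(k2 * y) - (k3 + k4)) f :=
  ((((hasDerivAt_id f).const_mul k2).mul_const y).neg.add
    (((hasDerivAt_id f).const_sub B).const_mul (k3 + k4))).congr_deriv (by ring)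

lemma jacDet_rateY_rateF :
    jacDet (rateY k1 k2 k3 k8 A B) (rateF k2 k3 k4 B) y f =
      (-2 * k1 * (A - B + f - y) - k2 * f + k8 * (A - B + f - 2 * y)) * (-(k2 * y) - (k3 + k4))
        - (2 * k1 * (A - B + f - y) - k2 * y - k3 + k8 * y) * (-(k2 * f)) := by
  rw [jacDet, (hasDerivAt_rateY_fst ..).deriv, (hasDerivAt_rateY_snd ..).deriv,
    (hasDerivAt_rateF_fst ..).deriv, (hasDerivAt_rateF_snd ..).deriv]

end Derivatives

section Witness

variable {c : ℝ}

lemma isStableSteadyState_at_half_half (hc : 0 < c) :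
    IsStableSteadyState (rateY 35 3000 3 285 6 3) (fun y f => c * rateF 3000 3 297 3 y f)
      (1 / 2, 1 / 2) :=
  IsSteadyState.isStableSteadyState_const_mul_snd
    (by norm_num [IsSteadyState, rateY, rateF]) hc
    (by norm_num [(hasDerivAt_rateY_fst ..).deriv]) (by norm_num [(hasDerivAt_rateF_snd ..).deriv])
    (by norm_num [jacDet_rateY_rateF])

lemma isStableSteadyState_at_sevenFifths_fifth (hc : 0 < c) :
    IsStableSteadyState (rateY 35 3000 3 285 6 3) (fun y f => c * rateF 3000 3 297 3 y f)
      (7 / 5, 1 / 5) :=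
  IsSteadyState.isStableSteadyState_const_mul_snd
    (by norm_num [IsSteadyState, rateY, rateF]) hc
    (by norm_num [(hasDerivAt_rateY_fst ..).deriv]) (by norm_num [(hasDerivAt_rateF_snd ..).deriv])
    (by norm_num [jacDet_rateY_rateF])

lemma isSaddleSteadyState_at_threeFifths_threeSevenths (hc : 0 < c) :
    IsSaddleSteadyState (rateY 35 3000 3 285 6 3) (fun y f => c * rateF 3000 3 297 3 y f)
      (3 / 5, 3 / 7) :=
  IsSaddleSteadyState.const_mul_snd
    (by norm_num [IsSaddleSteadyState, IsSteadyState, rateY, rateF, jacDet_rateY_rateF]) hc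

end Witness

end Autophosphorylation

/-- **Theorem 3 (steady states).** There are positive parameter values and `ε₀ > 0` such that
for all `0 < ε < ε₀` the planar system
`y' = k₁(A−B+f−y)² − k₂ f y + k₃(B−f) + k₈(A−B+f−y) y`,
`f' = ε⁻¹(−k₂ f y + (k₃+k₄)(B−f))`
has three distinct steady states in `Ω = {(y,f) : y > 0, 0 < f < B, A − B + f − y > 0}`:
two with Jacobian of negative trace and positive determinant (hyperbolic, asymptotically
stable) and one with Jacobian of negative determinant (hyperbolic saddle). -/
theorem planar_system_three_steady_states :
    ∃ k1 k2 k3 k4 k8 A B ε0 : ℝ,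
      0 < k1 ∧ 0 < k2 ∧ 0 < k3 ∧ 0 < k4 ∧ 0 < k8 ∧ 0 < A ∧ 0 < B ∧ 0 < ε0 ∧
      ∀ ε ∈ Set.Ioo (0 : ℝ) ε0,
        (fun (V1 V2 : ℝ → ℝ → ℝ) =>
          (fun (tr det : ℝ → ℝ → ℝ) =>
            ∃ p1 p2 p3 : ℝ × ℝ,
              p1 ≠ p2 ∧ p1 ≠ p3 ∧ p2 ≠ p3 ∧
              (p1 ∈ {p : ℝ × ℝ | 0 < p.1 ∧ 0 < p.2 ∧ p.2 < B ∧ 0 < A - B + p.2 - p.1}) ∧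
              (p2 ∈ {p : ℝ × ℝ | 0 < p.1 ∧ 0 < p.2 ∧ p.2 < B ∧ 0 < A - B + p.2 - p.1}) ∧
              (p3 ∈ {p : ℝ × ℝ | 0 < p.1 ∧ 0 < p.2 ∧ p.2 < B ∧ 0 < A - B + p.2 - p.1}) ∧
              V1 p1.1 p1.2 = 0 ∧ V2 p1.1 p1.2 = 0 ∧
              V1 p2.1 p2.2 = 0 ∧ V2 p2.1 p2.2 = 0 ∧
              V1 p3.1 p3.2 = 0 ∧ V2 p3.1 p3.2 = 0 ∧
              tr p1.1 p1.2 < 0 ∧ 0 < det p1.1 p1.2 ∧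
              tr p2.1 p2.2 < 0 ∧ 0 < det p2.1 p2.2 ∧
              det p3.1 p3.2 < 0)
          (fun y f => deriv (fun s => V1 s f) y + deriv (fun s => V2 y s) f)
          (fun y f => deriv (fun s => V1 s f) y * deriv (fun s => V2 y s) f
            - deriv (fun s => V1 y s) f * deriv (fun s => V2 s f) y))
        (fun y f => k1 * (A - B + f - y) ^ 2 - k2 * f * y + k3 * (B - f)
          + k8 * (A - B + f - y) * y)
        (fun y f => ε⁻¹ * (-(k2 * f * y) + (k3 + k4) * (B - f))) := by
  refine ⟨35, 3000, 3, 297, 285, 6, 3, 1, by norm_num, by norm_num, by norm_num, by norm_num,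
    by norm_num, by norm_num, by norm_num, by norm_num, fun ε hε => ?_⟩
  have hc : 0 < ε⁻¹ := inv_pos.mpr hε.1
  obtain ⟨⟨h1Y, h1F⟩, h1tr, h1det⟩ := Autophosphorylation.isStableSteadyState_at_half_half hc
  obtain ⟨⟨h2Y, h2F⟩, h2tr, h2det⟩ :=
    Autophosphorylation.isStableSteadyState_at_sevenFifths_fifth hc
  obtain ⟨⟨h3Y, h3F⟩, h3det⟩ :=
    Autophosphorylation.isSaddleSteadyState_at_threeFifths_threeSevenths hc
  exact ⟨(1 / 2, 1 / 2), (7 / 5, 1 / 5), (3 / 5, 3 / 7), by norm_num, by norm_num, by norm_num,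
    by norm_num, by norm_num, by norm_num, h1Y, h1F, h2Y, h2F, h3Y, h3F,
    h1tr, h1det, h2tr, h2det, h3det⟩
end

section
/- For all positive reals A, B, C, k_1, k_4, k_7, K_M1, K_M2 and every k_8 with 0 ≤ k_8 < k_1, the equation k_1 x^2 + k_8 x(A−x) + C k_7 x/(K_M2 + x) = B k_4 (A−x)/(K_M1 + A − x) has exactly one solution x in the open interval (0, A). -/
/-- In the Michaelis–Menten reduction with an external kinase, if `0 ≤ k₈ < k₁` then the
steady-state equation
`k₁ x² + k₈ x (A−x) + C k₇ x/(K_M2 + x) = B k₄ (A−x)/(K_M1 + A − x)`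
has exactly one solution `x ∈ (0, A)`. -/
theorem external_kinase_unique_steady_state
    (A B C k1 k4 k7 KM1 KM2 k8 : ℝ)
    (hA : 0 < A) (hB : 0 < B) (hC : 0 < C) (hk1 : 0 < k1) (hk4 : 0 < k4)
    (hk7 : 0 < k7) (hKM1 : 0 < KM1) (hKM2 : 0 < KM2)
    (hk8_nonneg : 0 ≤ k8) (hk8 : k8 < k1) :
    ∃! x : ℝ, x ∈ Set.Ioo (0 : ℝ) A ∧
      k1 * x ^ 2 + k8 * x * (A - x) + C * k7 * x / (KM2 + x)
        = B * k4 * (A - x) / (KM1 + A - x) := by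
  set g : ℝ → ℝ := fun x =>
    k1 * x ^ 2 + k8 * x * (A - x) + C * k7 * x / (KM2 + x)
      - B * k4 * (A - x) / (KM1 + A - x) with hg
  -- strict monotonicity on Icc 0 A
  have hmono : StrictMonoOn g (Set.Icc 0 A) := by
    intro a ha b hb hab
    obtain ⟨ha0, haA⟩ := ha
    obtain ⟨hb0, hbA⟩ := hb
    have hda : 0 < KM2 + a := by linarith
    have hdb : 0 < KM2 + b := by linarith
    have hea : 0 < KM1 + A - a := by linarith
    have heb : 0 < KM1 + A - b := by linarith
    have h1 : k1 * a ^ 2 + k8 * a * (A - a) < k1 * b ^ 2 + k8 * b * (A - b) := by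
      nlinarith [mul_pos (sub_pos.mpr hk8) (mul_pos (sub_pos.mpr hab) (by linarith : (0:ℝ) < a + b)),
        mul_nonneg hk8_nonneg (mul_nonneg (le_of_lt (sub_pos.mpr hab)) hA.le),
        sq_nonneg (a+b), mul_pos (sub_pos.mpr hab) hA]
    have h2 : C * k7 * a / (KM2 + a) ≤ C * k7 * b / (KM2 + b) := by
      rw [div_le_div_iff₀ hda hdb]
      nlinarith [mul_pos hC hk7, mul_pos (sub_pos.mpr hab) hKM2]
    have h3 : B * k4 * (A - b) / (KM1 + A - b) ≤ B * k4 * (A - a) / (KM1 + A - a) := by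
      rw [div_le_div_iff₀ heb hea]
      nlinarith [mul_pos hB hk4, mul_pos (sub_pos.mpr hab) hKM1]
    simp only [hg]
    linarith
  -- continuity on Icc 0 A
  have hcont : ContinuousOn g (Set.Icc 0 A) := by
    apply ContinuousOn.sub
    · apply ContinuousOn.add
      · exact (Continuous.continuousOn (by continuity))
      · apply ContinuousOn.div
        · exact (Continuous.continuousOn (by continuity))
        · exact (Continuous.continuousOn (by continuity))
        · intro x hx
          have : 0 < KM2 + x := by linarith [hx.1]
          exact ne_of_gt this
    · apply ContinuousOn.div
      · exact (Continuous.continuousOn (by continuity))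
      · exact (Continuous.continuousOn (by continuity))
      · intro x hx
        have : 0 < KM1 + A - x := by linarith [hx.2]
        exact ne_of_gt this
  -- endpoint values
  have hg0 : g 0 < 0 := by
    have h1 : 0 < KM1 + A - 0 := by linarith
    have h2 : 0 < KM2 + (0:ℝ) := by linarith
    simp only [hg]
    have : 0 < B * k4 * (A - 0) / (KM1 + A - 0) :=
      div_pos (by nlinarith [mul_pos hB hk4]) h1
    rw [show (0:ℝ)^2 = 0 by ring]
    rw [show C * k7 * 0 / (KM2 + 0) = 0 by ring]
    linarith
  have hgA : 0 < g A := by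
    simp only [hg]
    have h2 : 0 < KM2 + A := by linarith
    have : 0 < C * k7 * A / (KM2 + A) := div_pos (by positivity) h2
    have h3 : B * k4 * (A - A) / (KM1 + A - A) = 0 := by ring_nf
    rw [h3]
    nlinarith [mul_pos hk1 (mul_pos hA hA)]
  -- existence by IVT
  have hsub := intermediate_value_Ioo (le_of_lt hA) hcont
  have h0mem : (0:ℝ) ∈ Set.Ioo (g 0) (g A) := ⟨hg0, hgA⟩
  obtain ⟨x, hx, hgx⟩ := hsub h0mem
  refine ⟨x, ⟨hx, ?_⟩, ?_⟩
  · have := hgx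
    simp only [hg] at this
    linarith
  · intro y ⟨hy, hyeq⟩
    have hgy : g y = 0 := by simp only [hg]; linarith
    have hxI : x ∈ Set.Icc (0:ℝ) A := ⟨hx.1.le, hx.2.le⟩
    have hyI : y ∈ Set.Icc (0:ℝ) A := ⟨hy.1.le, hy.2.le⟩
    exact hmono.injOn hyI hxI (by rw [hgy, hgx])
end

section
/- With parameter values X = 3/2, k_1 = 8, k_2 = 1, δ = 1/6, ξ = 1, k_7 = 8, k_3 = 324/7, β = 11/936, k_4 = 16384/819, the set of steady states of the planar system in the region {(x_1, x_2) : x_1 > 0, x_2 > 0, x_1 + x_2 < X} is exactly {(1, 1/4), (2924/2457, 995/4914)}; moreover at (2924/2457, 995/4914) the Jacobian J has negative trace and positive determinant, so this steady state is hyperbolic and asymptotically stable. -/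
/-- Right-hand side `F₁` of the reduced two-dimensional model for wild-type Lck. -/
noncomputable def F1 (k1 k2 k3 k4 k7 β δ ξ X : ℝ) (x1 x2 : ℝ) : ℝ :=
  -(k2 * x1) + k1 * x2 + k4 * ξ * (X - x1 - x2) / (β * (ξ + 1) + ξ * (X - x1 - x2))
    - k3 * x1 * ((X - x1 - x2) + δ * x1)

/-- Right-hand side `F₂` of the reduced two-dimensional model for wild-type Lck. -/
noncomputable def F2 (k1 k2 k3 k4 k7 β δ ξ X : ℝ) (x1 x2 : ℝ) : ℝ :=
  k2 * x1 - k1 * x2 + (k7 / (ξ + 1)) * (X - x1 - x2)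

/-- Jacobian matrix of `(F₁, F₂)` with respect to `(x₁, x₂)`, formed from the four
partial derivatives. -/
noncomputable def Jac (k1 k2 k3 k4 k7 β δ ξ X : ℝ) (x1 x2 : ℝ) : Matrix (Fin 2) (Fin 2) ℝ :=
  !![deriv (fun s => F1 k1 k2 k3 k4 k7 β δ ξ X s x2) x1,
     deriv (fun s => F1 k1 k2 k3 k4 k7 β δ ξ X x1 s) x2;
     deriv (fun s => F2 k1 k2 k3 k4 k7 β δ ξ X s x2) x1,
     deriv (fun s => F2 k1 k2 k3 k4 k7 β δ ξ X x1 s) x2]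

private lemma lck_d11 :
    deriv (fun s => F1 8 1 (324/7) (16384/819) 8 (11/936) (1/6) 1 (3/2) s (995/4914))
      (2924/2457) = 2729621/819819 := by
  have heq : (fun s : ℝ => F1 8 1 (324/7) (16384/819) 8 (11/936) (1/6) 1 (3/2) s (995/4914))
      = fun s : ℝ => (270/7)*s^2 + (-38893/637)*s + 8*(995/4914)
        + (16384/819)*((3188/2457 - s)/(12983/9828 - s)) := by
    funext s; simp only [F1]; ring
  have key := ((((hasDerivAt_pow 2 (2924/2457:ℝ)).const_mul (270/7:ℝ)).add
      ((hasDerivAt_id (2924/2457:ℝ)).const_mul (-38893/637:ℝ))).add_const (8*(995/4914):ℝ)).add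
      ((((hasDerivAt_id (2924/2457:ℝ)).const_sub (3188/2457:ℝ)).div
        ((hasDerivAt_id (2924/2457:ℝ)).const_sub (12983/9828:ℝ))
        (by norm_num)).const_mul (16384/819:ℝ))
  rw [heq]
  exact (key.congr_deriv (by norm_num)).deriv

private lemma lck_d12 :
    deriv (fun s => F1 8 1 (324/7) (16384/819) 8 (11/936) (1/6) 1 (3/2) (2924/2457) s)
      (995/4914) = 29237960/819819 := by
  have heq : (fun s : ℝ => F1 8 1 (324/7) (16384/819) 8 (11/936) (1/6) 1 (3/2) (2924/2457) s)
      = fun s : ℝ => (40184/637)*s + (-45681652/1565109)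
        + (16384/819)*((1523/4914 - s)/(3277/9828 - s)) := by
    funext s; simp only [F1]; ring
  have key := (((hasDerivAt_id (995/4914:ℝ)).const_mul (40184/637:ℝ)).add_const
      (-45681652/1565109:ℝ)).add
      ((((hasDerivAt_id (995/4914:ℝ)).const_sub (1523/4914:ℝ)).div
        ((hasDerivAt_id (995/4914:ℝ)).const_sub (3277/9828:ℝ))
        (by norm_num)).const_mul (16384/819:ℝ))
  rw [heq]
  exact (key.congr_deriv (by norm_num)).deriv

private lemma lck_d21 :
    deriv (fun s => F2 8 1 (324/7) (16384/819) 8 (11/936) (1/6) 1 (3/2) s (995/4914))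
      (2924/2457) = -3 := by
  have heq : (fun s : ℝ => F2 8 1 (324/7) (16384/819) 8 (11/936) (1/6) 1 (3/2) s (995/4914))
      = fun s : ℝ => (-3)*s + 2924/819 := by
    funext s; simp only [F2]; ring
  have key := ((hasDerivAt_id (2924/2457:ℝ)).const_mul (-3:ℝ)).add_const (2924/819:ℝ)
  rw [heq]
  exact (key.congr_deriv (by norm_num)).deriv

private lemma lck_d22 :
    deriv (fun s => F2 8 1 (324/7) (16384/819) 8 (11/936) (1/6) 1 (3/2) (2924/2457) s)
      (995/4914) = -12 := by
  have heq : (fun s : ℝ => F2 8 1 (324/7) (16384/819) 8 (11/936) (1/6) 1 (3/2) (2924/2457) s)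
      = fun s : ℝ => (-12)*s + 1990/819 := by
    funext s; simp only [F2]; ring
  have key := ((hasDerivAt_id (995/4914:ℝ)).const_mul (-12:ℝ)).add_const (1990/819:ℝ)
  rw [heq]
  exact (key.congr_deriv (by norm_num)).deriv

/-- At the Bogdanov–Takens parameter values `X = 3/2`, `k₁ = 8`, `k₂ = 1`, `δ = 1/6`,
`ξ = 1`, `k₇ = 8`, `k₃ = 324/7`, `β = 11/936`, `k₄ = 16384/819`, the steady states of the
reduced Lck system in `{(x₁,x₂) : x₁ > 0, x₂ > 0, x₁ + x₂ < X}` are exactly `(1, 1/4)` and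
`(2924/2457, 995/4914)`; at the latter the Jacobian has negative trace and positive
determinant, so it is hyperbolic and asymptotically stable. -/
theorem lck_steady_states_at_BT_point :
    ({p : ℝ × ℝ | 0 < p.1 ∧ 0 < p.2 ∧ p.1 + p.2 < 3/2 ∧
        F1 8 1 (324/7) (16384/819) 8 (11/936) (1/6) 1 (3/2) p.1 p.2 = 0 ∧
        F2 8 1 (324/7) (16384/819) 8 (11/936) (1/6) 1 (3/2) p.1 p.2 = 0}
      = {((1 : ℝ), (1/4 : ℝ)), ((2924/2457 : ℝ), (995/4914 : ℝ))}) ∧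
    Matrix.trace
      (Jac 8 1 (324/7) (16384/819) 8 (11/936) (1/6) 1 (3/2) (2924/2457) (995/4914)) < 0 ∧
    0 < (Jac 8 1 (324/7) (16384/819) 8 (11/936) (1/6) 1 (3/2) (2924/2457) (995/4914)).det := by
  refine ⟨?_, ?_, ?_⟩
  · ext p
    obtain ⟨x, y⟩ := p
    simp only [Set.mem_setOf_eq, Set.mem_insert_iff, Set.mem_singleton_iff, Prod.mk.injEq]
    constructor
    · rintro ⟨h1, h2, h3, hF1, hF2⟩
      simp only [F1, F2] at hF1 hF2
      have hy : y = (2 - x)/4 := by linarith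
      rw [hy] at hF1
      rw [show (11/936:ℝ)*(1+1) + 1*(3/2 - x - (2 - x)/4) = 479/468 - 3/4*x from by ring]
        at hF1
      have hD : (479/468:ℝ) - 3/4*x ≠ 0 := by
        rw [hy] at h3
        have : x < 4/3 := by linarith
        have : (0:ℝ) < 479/468 - 3/4*x := by linarith
        exact ne_of_gt this
      have hND := div_mul_cancel₀ ((16384/819:ℝ) * 1 * (3/2 - x - (2 - x)/4)) hD
      have hfac : (x - 1)^2 * (x - 2924/2457) = 0 := by
        linear_combination (-4/81 * (479/468 - 3/4*x)) * hF1 + (4/81) * hND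
      rcases mul_eq_zero.mp hfac with h | h
      · left
        have hx1 : x = 1 := by
          have := pow_eq_zero_iff (n := 2) (by norm_num) |>.mp h
          linarith [this]
        exact ⟨hx1, by rw [hy, hx1]; norm_num⟩
      · right
        have hx1 : x = 2924/2457 := by linarith
        exact ⟨hx1, by rw [hy, hx1]; norm_num⟩
    · rintro (⟨hx, hy⟩ | ⟨hx, hy⟩) <;> subst hx <;> subst hy <;>
        refine ⟨by norm_num, by norm_num, by norm_num, ?_, ?_⟩ <;>
        · simp only [F1, F2]; norm_num
  · simp only [Jac, Matrix.trace_fin_two_of, lck_d11, lck_d22]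
    norm_num
  · simp only [Jac, Matrix.det_fin_two_of, lck_d11, lck_d12, lck_d21, lck_d22]
    norm_num
end

section
/- For all positive parameters k_1, k_2, k_3, k_4, k_7, β, δ, ξ, X, the planar system x_1' = F_1(x_1, x_2), x_2' = F_2(x_1, x_2) has at most three steady states in the region {(x_1, x_2) : x_1 > 0, x_2 > 0, x_1 + x_2 < X}. -/
open Polynomial in
theorem lck_cubic (k1 k2 k3 k4 k7 β δ ξ X : ℝ)
    (hk1 : 0 < k1) (hk2 : 0 < k2) (hk3 : 0 < k3) (hk4 : 0 < k4) (hk7 : 0 < k7)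
    (hβ : 0 < β) (hδ : 0 < δ) (hξ : 0 < ξ) (hX : 0 < X) :
    ∃ P : Polynomial ℝ, P ≠ 0 ∧ P.natDegree ≤ 3 ∧
      ∀ x1 x2 : ℝ, 0 < x1 → 0 < x2 → x1 + x2 < X →
        F1 k1 k2 k3 k4 k7 β δ ξ X x1 x2 = 0 →
        F2 k1 k2 k3 k4 k7 β δ ξ X x1 x2 = 0 →
        P.eval x1 = 0 := by
  have he : (0:ℝ) < ξ + 1 := by linarith
  have hK : (0:ℝ) < k1 * (ξ + 1) + k7 := by
    have := mul_pos hk1 he; linarith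
  refine ⟨C (-(ξ*(ξ+1)*(k1+k2)) * (k3*((ξ+1)*(k1+k2) - δ*(k1*(ξ+1)+k7)))) * Polynomial.X ^ 3
      + C ((β*(ξ+1)*(k1*(ξ+1)+k7) + ξ*(ξ+1)*k1*X) * (k3*((ξ+1)*(k1+k2) - δ*(k1*(ξ+1)+k7)))
          + -(ξ*(ξ+1)*(k1+k2)) * (-(k2*(k1*(ξ+1)+k7)) + k1*((ξ+1)*k2 - k7) - k3*(ξ+1)*k1*X)) * Polynomial.X ^ 2
      + C ((β*(ξ+1)*(k1*(ξ+1)+k7) + ξ*(ξ+1)*k1*X) * (-(k2*(k1*(ξ+1)+k7)) + k1*((ξ+1)*k2 - k7) - k3*(ξ+1)*k1*X)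
          + -(ξ*(ξ+1)*(k1+k2)) * (k1*k7*X) - (k1*(ξ+1)+k7)*(k4*(ξ*((ξ+1)*(k1+k2))))) * Polynomial.X
      + C ((β*(ξ+1)*(k1*(ξ+1)+k7) + ξ*(ξ+1)*k1*X) * (k1*k7*X)
          + (k1*(ξ+1)+k7)*(k4*(ξ*((ξ+1)*(k1*X))))), ?_, natDegree_cubic_le, ?_⟩
  · -- nonzero: constant coefficient is positive
    intro h
    have h0 := congrArg (eval 0) h
    simp only [eval_add, eval_mul, eval_pow, eval_C, eval_X, eval_zero, mul_zero, zero_pow,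
      ne_eq, OfNat.ofNat_ne_zero, not_false_eq_true, add_zero, zero_add] at h0
    have hpos : (0:ℝ) < (β*(ξ+1)*(k1*(ξ+1)+k7) + ξ*(ξ+1)*k1*X) * (k1*k7*X)
        + (k1*(ξ+1)+k7)*(k4*(ξ*((ξ+1)*(k1*X)))) := by
      have h1 : (0:ℝ) < β*(ξ+1)*(k1*(ξ+1)+k7) := mul_pos (mul_pos hβ he) hK
      have h2 : (0:ℝ) < ξ*(ξ+1)*k1*X := mul_pos (mul_pos (mul_pos hξ he) hk1) hX
      have h3 : (0:ℝ) < k1*k7*X := mul_pos (mul_pos hk1 hk7) hX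
      have h4 : (0:ℝ) < (k1*(ξ+1)+k7)*(k4*(ξ*((ξ+1)*(k1*X)))) :=
        mul_pos hK (mul_pos hk4 (mul_pos hξ (mul_pos he (mul_pos hk1 hX))))
      nlinarith [mul_pos (add_pos h1 h2) h3]
    linarith [h0 ▸ hpos]
  · intro x1 x2 hx1 hx2 hsum h1 h2
    have hu : (0:ℝ) < X - x1 - x2 := by linarith
    have hD : (0:ℝ) < β * (ξ + 1) + ξ * (X - x1 - x2) := by
      have := mul_pos hβ he; have := mul_pos hξ hu; linarith
    have hDne : β * (ξ + 1) + ξ * (X - x1 - x2) ≠ 0 := ne_of_gt hD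
    have hene : (ξ:ℝ) + 1 ≠ 0 := ne_of_gt he
    -- cleared F2
    have h2' : (k1*(ξ+1)+k7)*x2 = ((ξ+1)*k2 - k7)*x1 + k7*X := by
      rw [F2] at h2
      field_simp at h2
      linarith
    -- cleared F1
    have hclear : (β * (ξ + 1) + ξ * (X - x1 - x2)) * F1 k1 k2 k3 k4 k7 β δ ξ X x1 x2
        = (β * (ξ + 1) + ξ * (X - x1 - x2)) *
            (-(k2 * x1) + k1 * x2 - k3 * x1 * ((X - x1 - x2) + δ * x1))
          + k4 * ξ * (X - x1 - x2) := by
      rw [F1]; field_simp; ring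
    have hz : (β * (ξ + 1) + ξ * (X - x1 - x2)) *
            (-(k2 * x1) + k1 * x2 - k3 * x1 * ((X - x1 - x2) + δ * x1))
          + k4 * ξ * (X - x1 - x2) = 0 := by
      rw [← hclear, h1, mul_zero]
    simp only [eval_add, eval_mul, eval_pow, eval_C, eval_X]
    linear_combination (k1*(ξ+1)+k7)^2 * hz
      - ((-(k3*ξ*x1) - k1*ξ) * ((k1*(ξ+1)+k7)*x2 + ((ξ+1)*k2 - k7)*x1 + k7*X)
          + (-(k4*ξ) - 2*k3*ξ*x1*x1 + 2*k3*ξ*X*x1 + k3*δ*ξ*x1*x1 + k3*β*x1 + k3*β*ξ*x1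
            + k2*ξ*x1 - k1*ξ*x1 + k1*ξ*X + k1*β + k1*β*ξ) * (k1*(ξ+1)+k7)) * h2'


/-- For all positive parameter values, the reduced two-dimensional Lck system has at most
three steady states in the region `{(x₁, x₂) : x₁ > 0, x₂ > 0, x₁ + x₂ < X}`. -/
theorem lck_at_most_three_steady_states
    (k1 k2 k3 k4 k7 β δ ξ X : ℝ)
    (hk1 : 0 < k1) (hk2 : 0 < k2) (hk3 : 0 < k3) (hk4 : 0 < k4) (hk7 : 0 < k7)
    (hβ : 0 < β) (hδ : 0 < δ) (hξ : 0 < ξ) (hX : 0 < X) :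
    ∀ S : Finset (ℝ × ℝ),
      (∀ p ∈ S, 0 < p.1 ∧ 0 < p.2 ∧ p.1 + p.2 < X ∧
        F1 k1 k2 k3 k4 k7 β δ ξ X p.1 p.2 = 0 ∧
        F2 k1 k2 k3 k4 k7 β δ ξ X p.1 p.2 = 0) →
      S.card ≤ 3 := by

  intro S hS
  obtain ⟨P, hPne, hPdeg, hProot⟩ := lck_cubic k1 k2 k3 k4 k7 β δ ξ X hk1 hk2 hk3 hk4 hk7 hβ hδ hξ hX
  have he : (0:ℝ) < ξ + 1 := by linarith
  have hK : (0:ℝ) < k1 * (ξ + 1) + k7 := by have := mul_pos hk1 he; linarith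
  have hx2eq : ∀ p ∈ S, (k1*(ξ+1)+k7) * p.2 = ((ξ+1)*k2 - k7) * p.1 + k7*X := by
    intro p hp
    obtain ⟨_, _, _, _, h2⟩ := hS p hp
    rw [F2] at h2
    field_simp at h2
    linarith
  have hinj : Set.InjOn Prod.fst (S : Set (ℝ × ℝ)) := by
    intro p hp q hq hpq
    have e1 := hx2eq p hp
    have e2 := hx2eq q hq
    rw [hpq] at e1
    have : p.2 = q.2 := by
      have := e1.trans e2.symm
      exact mul_left_cancel₀ (ne_of_gt hK) this
    exact Prod.ext hpq this
  have hsub : S.image Prod.fst ⊆ P.roots.toFinset := by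
    intro x hx
    obtain ⟨p, hp, rfl⟩ := Finset.mem_image.mp hx
    obtain ⟨h1, h2, h3, h4, h5⟩ := hS p hp
    have := hProot p.1 p.2 h1 h2 h3 h4 h5
    rw [Multiset.mem_toFinset, Polynomial.mem_roots hPne]
    exact this
  calc S.card = (S.image Prod.fst).card := (Finset.card_image_of_injOn hinj).symm
    _ ≤ P.roots.toFinset.card := Finset.card_le_card hsub
    _ ≤ Multiset.card P.roots := Multiset.toFinset_card_le _
    _ ≤ P.natDegree := Polynomial.card_roots' P
    _ ≤ 3 := hPdeg
end

section
/- Suppose A, B, k_4 are positive reals. Then there exists K > 0 such that for every k_8 > K there exists κ > 0 such that for every K_M1 ∈ (0, κ), the function g(y) = k_8(A − y)y − B k_4 y/(K_M1 + y) has exactly three zeros 0 = y_0 < y_1 < y_2 in the interval [0, A), and g'(y_0) < 0, g'(y_1) > 0, g'(y_2) < 0; that is, the ODE y' = g(y) has three hyperbolic steady states in [0, A), of which the boundary steady state 0 and the largest steady state are asymptotically stable and the middle one is unstable. -/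
/-!
Write `c = B k₄`. Off the pole, `g(y) = y q(y) / (K_M1 + y)` with
`q(y) = k₈ (A - y)(K_M1 + y) - c`, a downward parabola with `q(A) = -c < 0`. For
`k₈ > 4c / A²` and `K_M1 < c / (k₈ A)` also `q(0) < 0 < q((A - K_M1)/2)`, so
`q = -k₈ (y - y₁)(y - y₂)` with `0 < y₁ < y₂ < A`. Near each simple zero `r` of the cubic
`y (y - y₁)(y - y₂)` write `g(y) = (y - r) h(y)`; then `g'(r) = h(r)`, whose sign alternates
along `0 < y₁ < y₂`.
-/

open Filter Topology

theorem deriv_eq_of_eventuallyEq_sub_mul {𝕜 : Type*} [NontriviallyNormedField 𝕜] {f h : 𝕜 → 𝕜}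
    {x : 𝕜} (hf : f =ᶠ[𝓝 x] fun y => (y - x) * h y) (hh : DifferentiableAt 𝕜 h x) :
    deriv f x = h x := by
  have hd : HasDerivAt (fun y => (y - x) * h y) (1 * h x + (x - x) * deriv h x) x :=
    ((hasDerivAt_id x).sub_const x).mul hh.hasDerivAt
  rw [hf.deriv_eq, hd.deriv]
  ring

noncomputable def dohertyRate (A c k8 K : ℝ) (y : ℝ) : ℝ := k8 * (A - y) * y - c * y / (K + y)

theorem exists_quadratic_roots_mem_Ioo {A K k8 c : ℝ} (hk8 : 0 < k8) (hK : 0 < K) (hKA : K < A)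
    (h0 : k8 * A * K < c) (hdisc : 4 * c < k8 * (A + K) ^ 2) :
    ∃ y1 y2, 0 < y1 ∧ y1 < y2 ∧ y2 < A ∧
      ∀ y, k8 * (A - y) * (K + y) - c = -k8 * (y - y1) * (y - y2) := by
  have hD : 0 < (A + K) ^ 2 - 4 * c / k8 := by
    rw [sub_pos, div_lt_iff₀ hk8]; linarith
  set s := √((A + K) ^ 2 - 4 * c / k8)
  have hs : k8 * s ^ 2 = k8 * (A + K) ^ 2 - 4 * c := by
    rw [Real.sq_sqrt hD.le]; field_simp
  have hs_pos : 0 < s := Real.sqrt_pos.mpr hD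
  have hs_lt_sub : s < A - K := by
    refine lt_of_pow_lt_pow_left₀ 2 (by linarith) (lt_of_mul_lt_mul_left ?_ hk8.le)
    linarith
  have hs_lt_add : s < A + K := by
    refine lt_of_pow_lt_pow_left₀ 2 (by linarith) (lt_of_mul_lt_mul_left ?_ hk8.le)
    have : 0 < k8 * A * K := mul_pos (mul_pos hk8 (hK.trans hKA)) hK
    linarith
  refine ⟨(A - K - s) / 2, (A - K + s) / 2, by linarith, by linarith, by linarith, fun y => ?_⟩
  linear_combination (-1 / 4 : ℝ) * hs

section

variable {A c k8 K y1 y2 : ℝ}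

theorem dohertyRate_eq_cubic_div
    (hq : ∀ y, k8 * (A - y) * (K + y) - c = -k8 * (y - y1) * (y - y2)) {y : ℝ}
    (hy : K + y ≠ 0) :
    dohertyRate A c k8 K y = -k8 * (y * (y - y1) * (y - y2)) / (K + y) := by
  rw [dohertyRate, eq_div_iff hy, sub_mul, div_mul_cancel₀ _ hy]
  linear_combination y * hq y

theorem dohertyRate_eventuallyEq_cubic_div
    (hq : ∀ y, k8 * (A - y) * (K + y) - c = -k8 * (y - y1) * (y - y2)) {x : ℝ}
    (hx : 0 < K + x) :
    dohertyRate A c k8 K =ᶠ[𝓝 x] fun y => -k8 * (y * (y - y1) * (y - y2)) / (K + y) := by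
  filter_upwards [Ioi_mem_nhds (neg_lt_iff_pos_add'.mpr hx)] with y hy
  exact dohertyRate_eq_cubic_div hq (neg_lt_iff_pos_add'.mp hy).ne'

theorem dohertyRate_eq_zero_iff (hk8 : 0 < k8)
    (hq : ∀ y, k8 * (A - y) * (K + y) - c = -k8 * (y - y1) * (y - y2)) {y : ℝ}
    (hy : 0 < K + y) :
    dohertyRate A c k8 K y = 0 ↔ y = 0 ∨ y = y1 ∨ y = y2 := by
  rw [dohertyRate_eq_cubic_div hq hy.ne']
  simp [hk8.ne', hy.ne', sub_eq_zero, or_assoc]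

theorem deriv_dohertyRate_of_factor
    (hq : ∀ y, k8 * (A - y) * (K + y) - c = -k8 * (y - y1) * (y - y2)) {r : ℝ}
    (hr : 0 < K + r) {p : ℝ → ℝ} (hp : ∀ y, y * (y - y1) * (y - y2) = (y - r) * p y)
    (hp_diff : Differentiable ℝ p) :
    deriv (dohertyRate A c k8 K) r = -k8 * p r / (K + r) := by
  refine deriv_eq_of_eventuallyEq_sub_mul (h := fun y => -k8 * p y / (K + y)) ?_ ?_
  · filter_upwards [dohertyRate_eventuallyEq_cubic_div hq hr] with y hy
    rw [hy, hp]
    ring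
  · exact ((hp_diff r).const_mul _).div (by fun_prop) hr.ne'

end

/-- Limiting case `k₁ = 0` of the Doherty model: for every sufficiently large `k₈` and
sufficiently small `K_M1 > 0`, the function
`g(y) = k₈ (A − y) y − B k₄ y / (K_M1 + y)`
has exactly three zeros `0 = y₀ < y₁ < y₂` in `[0, A)`, with `g'(y₀) < 0`, `g'(y₁) > 0`,
`g'(y₂) < 0`; i.e. the ODE `y' = g(y)` has three hyperbolic steady states in `[0, A)`,
the boundary state `0` and the largest one asymptotically stable, the middle one
unstable. -/
theorem lisman_bistability
    (A B k4 : ℝ) (hA : 0 < A) (hB : 0 < B) (hk4 : 0 < k4) :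
    ∃ K > (0 : ℝ), ∀ k8 : ℝ, k8 > K →
      ∃ κ > (0 : ℝ), ∀ KM1 : ℝ, KM1 ∈ Set.Ioo (0 : ℝ) κ →
        ∃ y1 y2 : ℝ,
          (fun g : ℝ → ℝ =>
            0 < y1 ∧ y1 < y2 ∧ y2 < A ∧
            (∀ y ∈ Set.Ico (0 : ℝ) A, (g y = 0 ↔ (y = 0 ∨ y = y1 ∨ y = y2))) ∧
            deriv g 0 < 0 ∧ deriv g y1 > 0 ∧ deriv g y2 < 0)
          (fun y => k8 * (A - y) * y - B * k4 * y / (KM1 + y)) := by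
  refine ⟨4 * B * k4 / A ^ 2, by positivity, fun k8 hk8 => ?_⟩
  have hk8_pos : 0 < k8 := lt_trans (by positivity) hk8
  have hvertex : 4 * (B * k4) < k8 * A ^ 2 := by
    rw [gt_iff_lt, div_lt_iff₀ (by positivity)] at hk8
    linarith
  refine ⟨B * k4 / (k8 * A), by positivity, fun KM1 ⟨hK, hKκ⟩ => ?_⟩
  have h0 : k8 * A * KM1 < B * k4 := by rwa [lt_div_iff₀ (by positivity), mul_comm] at hKκ
  have hKA : KM1 < A := by nlinarith [mul_pos hk8_pos hA]
  obtain ⟨y1, y2, hy1, hy12, hy2A, hq⟩ :=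
    exists_quadratic_roots_mem_Ioo hk8_pos hK hKA h0
      (by nlinarith [mul_pos (mul_pos hk8_pos hA) hK, mul_pos (mul_pos hk8_pos hK) hK])
  have hy2 : 0 < y2 := hy1.trans hy12
  refine ⟨y1, y2, hy1, hy12, hy2A,
    fun y hy => dohertyRate_eq_zero_iff hk8_pos hq (by linarith [hy.1]), ?_, ?_, ?_⟩
  · refine (deriv_dohertyRate_of_factor hq (r := 0) (by linarith)
      (p := fun y => (y - y1) * (y - y2)) (fun y => by ring) (by fun_prop)).trans_lt ?_
    exact div_neg_of_neg_of_pos (by nlinarith [mul_pos hy1 hy2]) (by linarith)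
  · refine lt_of_lt_of_eq ?_ (deriv_dohertyRate_of_factor hq (r := y1) (by linarith)
      (p := fun y => y * (y - y2)) (fun y => by ring) (by fun_prop)).symm
    exact div_pos (by nlinarith [mul_pos hy1 (sub_pos.2 hy12)]) (by linarith)
  · refine (deriv_dohertyRate_of_factor hq (r := y2) (by linarith)
      (p := fun y => y * (y - y1)) (fun y => by ring) (by fun_prop)).trans_lt ?_
    exact div_neg_of_neg_of_pos (by nlinarith [mul_pos hy2 (sub_pos.2 hy12)]) (by linarith)
end
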